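/- arXiv:2412.18309 — 2 statements merged into one kernel-verified Lean document; each statement's English description precedes it below -/
import Mathlib

section
/- If U₁ block-encodes A₁ and U₂ block-encodes A₂ (with separate ancilla registers), then the product unitary (appropriately arranging ancillas) block-encodes A₁A₂: formally, (⟨0|_{a₁}⟨0|_{a₂}⊗I)(I_{a₂}⊗U₁)(I_{a₁}⊗U₂ with registers swapped)(|0⟩_{a₁}|0⟩_{a₂}⊗I) = A₁A₂. -/
open scoped Matrix.Norms.L2Operator

namespace Matrix

variable {R ι₁ ι₂ n : Type*} [NonUnitalNonAssocSemiring R] [Fintype ι₁] [Fintype ι₂] [Fintype n]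
  [DecidableEq ι₁] [DecidableEq ι₂]

theorem mul_apply_of_separate_registers (U₁ : Matrix (ι₁ × n) (ι₁ × n) R)
    (U₂ : Matrix (ι₂ × n) (ι₂ × n) R) (V₁ V₂ : Matrix (ι₁ × ι₂ × n) (ι₁ × ι₂ × n) R)
    (hV₁ : ∀ p q, V₁ p q = if p.2.1 = q.2.1 then U₁ (p.1, p.2.2) (q.1, q.2.2) else 0)
    (hV₂ : ∀ p q, V₂ p q = if p.1 = q.1 then U₂ (p.2.1, p.2.2) (q.2.1, q.2.2) else 0)
    (i₁ j₁ : ι₁) (i₂ j₂ : ι₂) (r c : n) :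
    (V₁ * V₂) (i₁, i₂, r) (j₁, j₂, c) = ∑ k, U₁ (i₁, r) (j₁, k) * U₂ (i₂, k) (j₂, c) := by
  simp only [mul_apply, hV₁, hV₂, Fintype.sum_prod_type, mul_ite, ite_mul, zero_mul, mul_zero,
    Finset.sum_ite_irrel, Finset.sum_const_zero, Finset.sum_ite_eq, Finset.sum_ite_eq',
    Finset.mem_univ, if_true]

end Matrix

theorem block_encoding_product_general (a₁ a₂ N : ℕ) [NeZero a₁] [NeZero a₂]
    (A₁ A₂ : Matrix (Fin N) (Fin N) ℂ)
    (U₁ : Matrix (Fin a₁ × Fin N) (Fin a₁ × Fin N) ℂ)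
    (U₂ : Matrix (Fin a₂ × Fin N) (Fin a₂ × Fin N) ℂ)
    (hb₁ : ∀ r c : Fin N, U₁ (0, r) (0, c) = A₁ r c)
    (hb₂ : ∀ r c : Fin N, U₂ (0, r) (0, c) = A₂ r c)
    -- `V₁` acts as `U₁` on the first ancilla and the system, identity on the second ancilla
    (V₁ V₂ : Matrix (Fin a₁ × Fin a₂ × Fin N) (Fin a₁ × Fin a₂ × Fin N) ℂ)
    (hV₁ : ∀ p q, V₁ p q = if p.2.1 = q.2.1 then U₁ (p.1, p.2.2) (q.1, q.2.2) else 0)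
    (hV₂ : ∀ p q, V₂ p q = if p.1 = q.1 then U₂ (p.2.1, p.2.2) (q.2.1, q.2.2) else 0) :
    ∀ r c : Fin N, (V₁ * V₂) (0, 0, r) (0, 0, c) = (A₁ * A₂) r c := by
  intro r c
  simp only [Matrix.mul_apply_of_separate_registers U₁ U₂ V₁ V₂ hV₁ hV₂, Matrix.mul_apply, hb₁, hb₂]

/-- The product of two block-encodings (acting on separate ancilla registers) is a
block-encoding of the product of the encoded matrices. -/
theorem block_encoding_product (a₁ a₂ N : ℕ) [NeZero a₁] [NeZero a₂]
    (A₁ A₂ : Matrix (Fin N) (Fin N) ℂ) (hA₁ : ‖A₁‖ ≤ 1) (hA₂ : ‖A₂‖ ≤ 1)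
    (U₁ : Matrix (Fin a₁ × Fin N) (Fin a₁ × Fin N) ℂ)
    (U₂ : Matrix (Fin a₂ × Fin N) (Fin a₂ × Fin N) ℂ)
    (hU₁ : U₁ ∈ Matrix.unitaryGroup (Fin a₁ × Fin N) ℂ)
    (hU₂ : U₂ ∈ Matrix.unitaryGroup (Fin a₂ × Fin N) ℂ)
    (hb₁ : ∀ r c : Fin N, U₁ (0, r) (0, c) = A₁ r c)
    (hb₂ : ∀ r c : Fin N, U₂ (0, r) (0, c) = A₂ r c)
    -- `V₁` acts as `U₁` on the first ancilla and the system, identity on the second ancilla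
    (V₁ V₂ : Matrix (Fin a₁ × Fin a₂ × Fin N) (Fin a₁ × Fin a₂ × Fin N) ℂ)
    (hV₁ : ∀ p q, V₁ p q = if p.2.1 = q.2.1 then U₁ (p.1, p.2.2) (q.1, q.2.2) else 0)
    (hV₂ : ∀ p q, V₂ p q = if p.1 = q.1 then U₂ (p.2.1, p.2.2) (q.2.1, q.2.2) else 0) :
    ∀ r c : Fin N, (V₁ * V₂) (0, 0, r) (0, 0, c) = (A₁ * A₂) r c :=
  block_encoding_product_general a₁ a₂ N A₁ A₂ U₁ U₂ hb₁ hb₂ V₁ V₂ hV₁ hV₂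
end

section
/- For a convex differentiable function f : ℝⁿ → ℝ with L-Lipschitz gradient and minimizer x*, gradient descent with step size η = 1/L satisfies f(x_T) − f(x*) ≤ L‖x₀ − x*‖²/(2T); hence T = O(1/δ) iterations suffice to get within δ of the minimum value. -/
/-!
By convexity, `f xₜ - f x* ≤ ⟪∇f xₜ, xₜ - x*⟫`, and by the descent lemma (the quadratic upper
bound coming from the Lipschitz gradient) a step of length `1/L` lowers `f` by at least
`‖∇f xₜ‖² / (2L)`. Expanding `‖xₜ₊₁ - x*‖²` turns these two facts into the telescoping bound
`f xₜ₊₁ - f x* ≤ L/2 (‖xₜ - x*‖² - ‖xₜ₊₁ - x*‖²)`. Summing over `t < T` and using that `f xₜ`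
decreases gives `T (f x_T - f x*) ≤ L/2 ‖x₀ - x*‖²`.
-/

open scoped RealInnerProductSpace Gradient

open Finset

section NormedSpace

variable {E : Type*} [NormedAddCommGroup E] [NormedSpace ℝ E] {f : E → ℝ}

theorem hasDerivAt_comp_add_smul {a v : E} {t : ℝ} (hf : DifferentiableAt ℝ f (a + t • v)) :
    HasDerivAt (fun s : ℝ => f (a + s • v)) (fderiv ℝ f (a + t • v) v) t := by
  have hline : HasDerivAt (fun s : ℝ => a + s • v) v t := by
    simpa using ((hasDerivAt_id t).smul_const v).const_add a
  exact hf.hasFDerivAt.comp_hasDerivAt t hline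

theorem ConvexOn.add_fderiv_sub_le {s : Set E} (hconv : ConvexOn ℝ s f) {a b : E}
    (ha : a ∈ s) (hb : b ∈ s) (hf : DifferentiableAt ℝ f a) :
    f a + fderiv ℝ f a (b - a) ≤ f b := by
  have hline : ConvexOn ℝ (Set.Icc 0 1) (fun t : ℝ => f (a + t • (b - a))) := by
    refine ((hconv.comp_affineMap (AffineMap.lineMap a b)).subset
      (hconv.1.mapsTo_lineMap ha hb) (convex_Icc 0 1)).congr fun t _ => ?_
    simp [AffineMap.lineMap_apply_module', add_comm]
  have hderiv : HasDerivAt (fun t : ℝ => f (a + t • (b - a))) (fderiv ℝ f a (b - a)) 0 := by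
    simpa using hasDerivAt_comp_add_smul (t := 0) (v := b - a) (by simpa using hf)
  have hslope := hline.le_slope_of_hasDerivAt (by simp) (by simp) zero_lt_one hderiv
  simp only [slope_def_field, zero_smul, add_zero, one_smul, add_sub_cancel, sub_zero,
    div_one] at hslope
  linarith

theorem le_add_fderiv_sub_add_sq (hf : Differentiable ℝ f) {L : ℝ}
    (hLip : ∀ x y, ‖fderiv ℝ f x - fderiv ℝ f y‖ ≤ L * ‖x - y‖) (a b : E) :
    f b ≤ f a + fderiv ℝ f a (b - a) + L / 2 * ‖b - a‖ ^ 2 := by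
  obtain ⟨v, rfl⟩ : ∃ v, b = a + v := ⟨b - a, (add_sub_cancel a b).symm⟩
  rw [add_sub_cancel_left]
  let g : ℝ → ℝ := fun t => f (a + t • v) - t * fderiv ℝ f a v - L / 2 * t ^ 2 * ‖v‖ ^ 2
  have hderiv (t : ℝ) : HasDerivAt g
      (fderiv ℝ f (a + t • v) v - fderiv ℝ f a v - L * t * ‖v‖ ^ 2) t := by
    have h₁ := hasDerivAt_comp_add_smul (hf (a + t • v))
    have h₂ := (hasDerivAt_id t).mul_const (fderiv ℝ f a v)
    have h₃ := ((hasDerivAt_pow 2 t).const_mul (L / 2)).mul_const (‖v‖ ^ 2)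
    exact ((h₁.sub h₂).sub h₃).congr_deriv (by push_cast; ring)
  have hderiv_nonpos (t : ℝ) (ht : 0 ≤ t) : deriv g t ≤ 0 := by
    have hLip_t : ‖fderiv ℝ f (a + t • v) - fderiv ℝ f a‖ ≤ L * (t * ‖v‖) := by
      simpa [norm_smul, abs_of_nonneg ht] using hLip (a + t • v) a
    have := ((fderiv ℝ f (a + t • v) - fderiv ℝ f a).le_opNorm v).trans
      (mul_le_mul_of_nonneg_right hLip_t (norm_nonneg v))
    rw [sub_apply] at this
    rw [(hderiv t).deriv]
    linarith [Real.le_norm_self (fderiv ℝ f (a + t • v) v - fderiv ℝ f a v)]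
  have hanti : AntitoneOn g (Set.Icc 0 1) :=
    antitoneOn_of_deriv_nonpos (convex_Icc 0 1)
      (HasDerivAt.continuousOn fun t _ => hderiv t)
      (fun t _ => (hderiv t).differentiableAt.differentiableWithinAt)
      (fun t ht => hderiv_nonpos t (interior_subset ht).1)
  have := hanti (by simp) (by simp) zero_le_one
  simp only [g, zero_smul, add_zero, one_smul, zero_mul, sub_zero, one_mul, one_pow] at this
  linarith

end NormedSpace

section InnerProductSpace

variable {F : Type*} [NormedAddCommGroup F] [InnerProductSpace ℝ F] [CompleteSpace F] {f : F → ℝ}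

theorem norm_fderiv_sub_fderiv (x y : F) : ‖fderiv ℝ f x - fderiv ℝ f y‖ = ‖∇ f x - ∇ f y‖ := by
  rw [← toDual_gradient, ← toDual_gradient, ← map_sub, LinearIsometryEquiv.norm_map]

variable {L : ℝ}

theorem apply_gradient_step_le (hf : Differentiable ℝ f) (hL : 0 < L)
    (hLip : ∀ x y, ‖∇ f x - ∇ f y‖ ≤ L * ‖x - y‖) (x : F) :
    f (x - (1 / L) • ∇ f x) ≤ f x - ‖∇ f x‖ ^ 2 / (2 * L) := by
  have h := le_add_fderiv_sub_add_sq hf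
    (fun x y => (norm_fderiv_sub_fderiv x y).trans_le (hLip x y)) x (x - (1 / L) • ∇ f x)
  rw [sub_sub_cancel_left, ← inner_gradient_left, inner_neg_right, real_inner_smul_right,
    real_inner_self_eq_norm_sq, norm_neg, norm_smul, Real.norm_of_nonneg (by positivity)] at h
  have : -(1 / L * ‖∇ f x‖ ^ 2) + L / 2 * (1 / L * ‖∇ f x‖) ^ 2 = -(‖∇ f x‖ ^ 2 / (2 * L)) := by
    field_simp; ring
  linarith

theorem apply_gradient_step_sub_le (hconv : ConvexOn ℝ Set.univ f) (hf : Differentiable ℝ f)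
    (hL : 0 < L) (hLip : ∀ x y, ‖∇ f x - ∇ f y‖ ≤ L * ‖x - y‖) (x z : F) :
    f (x - (1 / L) • ∇ f x) - f z ≤
      L / 2 * ‖x - z‖ ^ 2 - L / 2 * ‖x - (1 / L) • ∇ f x - z‖ ^ 2 := by
  have hdecrease := apply_gradient_step_le hf hL hLip x
  have hsupport := hconv.add_fderiv_sub_le (Set.mem_univ x) (Set.mem_univ z) (hf x)
  rw [← inner_gradient_left, inner_sub_right] at hsupport
  have hnorm : ‖x - (1 / L) • ∇ f x - z‖ ^ 2 =
      ‖x - z‖ ^ 2 - 2 / L * (⟪∇ f x, x⟫ - ⟪∇ f x, z⟫) + ‖∇ f x‖ ^ 2 / L ^ 2 := by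
    rw [sub_right_comm, norm_sub_sq_real, real_inner_smul_right, real_inner_comm, inner_sub_right,
      norm_smul, Real.norm_of_nonneg (by positivity)]
    ring
  have : L / 2 * (‖x - z‖ ^ 2 - ‖x - (1 / L) • ∇ f x - z‖ ^ 2) =
      ⟪∇ f x, x⟫ - ⟪∇ f x, z⟫ - ‖∇ f x‖ ^ 2 / (2 * L) := by
    rw [hnorm]; field_simp; ring
  linarith

end InnerProductSpace

theorem Antitone.natCast_mul_le_of_le_sub_succ {a d : ℕ → ℝ} (ha : Antitone a)
    (hd : ∀ t, 0 ≤ d t) (h : ∀ t, a (t + 1) ≤ d t - d (t + 1)) (T : ℕ) : T * a T ≤ d 0 :=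
  calc (T : ℝ) * a T = ∑ _t ∈ range T, a T := by simp
    _ ≤ ∑ t ∈ range T, a (t + 1) := sum_le_sum fun t ht => ha (mem_range.1 ht)
    _ ≤ ∑ t ∈ range T, (d t - d (t + 1)) := sum_le_sum fun t _ => h t
    _ = d 0 - d T := sum_range_sub' d T
    _ ≤ d 0 := sub_le_self _ (hd T)

theorem gradient_descent_convex_rate_general (n : ℕ) (f : EuclideanSpace ℝ (Fin n) → ℝ)
    (hconv : ConvexOn ℝ Set.univ f) (hf : Differentiable ℝ f)
    (L : ℝ) (hL : 0 < L)
    (hLip : ∀ x y, ‖gradient f x - gradient f y‖ ≤ L * ‖x - y‖)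
    (xstar : EuclideanSpace ℝ (Fin n))
    (x : ℕ → EuclideanSpace ℝ (Fin n))
    (hiter : ∀ t, x (t + 1) = x t - (1 / L) • gradient f (x t)) :
    ∀ T : ℕ, 0 < T → f (x T) - f xstar ≤ L * ‖x 0 - xstar‖ ^ 2 / (2 * T) := by
  intro T hT
  have hanti : Antitone fun t => f (x t) - f xstar := antitone_nat_of_succ_le fun t => by
    have hgap : 0 ≤ ‖∇ f (x t)‖ ^ 2 / (2 * L) := by positivity
    linarith [hiter t ▸ apply_gradient_step_le hf hL hLip (x t)]
  have hrate := hanti.natCast_mul_le_of_le_sub_succ (d := fun t => L / 2 * ‖x t - xstar‖ ^ 2)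
    (fun t => by positivity)
    (fun t => hiter t ▸ apply_gradient_step_sub_le hconv hf hL hLip (x t) xstar) T
  rw [le_div_iff₀ (by positivity)]
  linarith

/-- For a convex differentiable `f` with `L`-Lipschitz gradient and minimizer `x*`,
gradient descent with step size `1/L` satisfies
`f(x_T) - f(x*) ≤ L‖x₀ - x*‖² / (2T)`. -/
theorem gradient_descent_convex_rate (n : ℕ) (f : EuclideanSpace ℝ (Fin n) → ℝ)
    (hconv : ConvexOn ℝ Set.univ f) (hf : Differentiable ℝ f)
    (L : ℝ) (hL : 0 < L)
    (hLip : ∀ x y, ‖gradient f x - gradient f y‖ ≤ L * ‖x - y‖)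
    (xstar : EuclideanSpace ℝ (Fin n)) (hmin : ∀ y, f xstar ≤ f y)
    (x : ℕ → EuclideanSpace ℝ (Fin n))
    (hiter : ∀ t, x (t + 1) = x t - (1 / L) • gradient f (x t)) :
    ∀ T : ℕ, 0 < T → f (x T) - f xstar ≤ L * ‖x 0 - xstar‖ ^ 2 / (2 * T) :=
  gradient_descent_convex_rate_general n f hconv hf L hL hLip xstar x hiter
end
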